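/- Let m > 1, 1 < p < m, let σ be a real number with σ(m−1) + 2(p−1) > 0, let N ≥ 1 be an integer, and set α = (σ+2)/(σ(m−1)+2(p−1)) and β = (m−p)/(σ(m−1)+2(p−1)). Suppose R > 0 and f : (R,∞) → (0,∞) is a twice continuously differentiable positive solution of (f^m)''(ξ) + ((N−1)/ξ)(f^m)'(ξ) − α f(ξ) + β ξ f'(ξ) + ξ^σ f(ξ)^p = 0 such that, as ξ → ∞, ξ^{−2} f(ξ)^{m−1} → 0, ξ^{−1} f(ξ)^{m−2} f'(ξ) → 0, and ξ^σ f(ξ)^{p−1} → ℓ for some ℓ ∈ (0,∞). Then ℓ = 1/(p−1). -/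

import Mathlib

/-!
With `κ = σ / (p - 1)`, consider the flux `Ψ(ξ) = ξ^(κ-1) (β ξ f + (f^m)')`. In the variables
`Y = ξ⁻¹ f^(m-2) f'` and `Z = ξ^σ f^(p-1)` it reads `Ψ = ξ^κ f (β + m Y)`, and the profile
equation gives `ξ Ψ' = ξ^κ f (α + β κ - Z + (κ - N) m Y)`. Since `ξ^κ f → ℓ^(1/(p-1)) > 0`,
`Y → 0` and `Z → ℓ`, the flux converges while `ξ Ψ'` tends to `ℓ^(1/(p-1)) (α + β κ - ℓ)`.
A convergent function cannot have `ξ Ψ'` tend to a nonzero limit (by the mean value theorem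
on `[ξ, 2ξ]`), hence `ℓ = α + β κ`, which equals `1 / (p - 1)`.
-/

open Set Filter Topology

theorem eq_zero_of_tendsto_of_tendsto_mul_deriv {Ψ D : ℝ → ℝ} {A K : ℝ}
    (hD : ∀ᶠ x in atTop, HasDerivAt Ψ (D x) x) (hΨ : Tendsto Ψ atTop (𝓝 A))
    (hK : Tendsto (fun x => x * D x) atTop (𝓝 K)) : K = 0 := by
  obtain ⟨a, ha⟩ := eventually_atTop.1 hD
  have hmvt : ∀ ξ, max a 0 < ξ → ∃ c ∈ Ioo ξ (2 * ξ), Ψ (2 * ξ) - Ψ ξ = ξ * D c := by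
    intro ξ hξ
    have hξa : a < ξ := (le_max_left _ _).trans_lt hξ
    have hξ0 : 0 < ξ := (le_max_right _ _).trans_lt hξ
    have hderiv : ∀ y ∈ Icc ξ (2 * ξ), HasDerivAt Ψ (D y) y :=
      fun y hy => ha y (hξa.le.trans hy.1)
    obtain ⟨c, hc, hslope⟩ := exists_hasDerivAt_eq_slope Ψ D (by linarith)
      (fun y hy => (hderiv y hy).continuousAt.continuousWithinAt)
      (fun y hy => hderiv y (Ioo_subset_Icc_self hy))
    refine ⟨c, hc, ?_⟩
    rw [hslope]
    field_simp
    ring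
  choose! c hc hslope using hmvt
  have hc_atTop : Tendsto c atTop atTop :=
    tendsto_atTop_mono' atTop ((eventually_gt_atTop (max a 0)).mono fun ξ hξ => (hc ξ hξ).1.le)
      tendsto_id
  have hlower : ∀ᶠ ξ in atTop, |c ξ * D (c ξ)| / 2 ≤ |Ψ (2 * ξ) - Ψ ξ| := by
    filter_upwards [eventually_gt_atTop (max a 0)] with ξ hξ
    have hξ0 : 0 < ξ := (le_max_right _ _).trans_lt hξ
    obtain ⟨hξc, hc2ξ⟩ := hc ξ hξ
    rw [hslope ξ hξ, abs_mul, abs_mul, abs_of_pos hξ0, abs_of_pos (hξ0.trans hξc)]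
    nlinarith [abs_nonneg (D (c ξ))]
  have hdiff : Tendsto (fun ξ => |Ψ (2 * ξ) - Ψ ξ|) atTop (𝓝 0) := by
    simpa using ((hΨ.comp (tendsto_id.const_mul_atTop two_pos)).sub hΨ).abs
  have hK2 : |K| / 2 ≤ 0 :=
    le_of_tendsto_of_tendsto (((hK.comp hc_atTop).abs).div_const 2) hdiff hlower
  exact abs_nonpos_iff.1 (by linarith)

theorem tendsto_rpow_div_mul_of_tendsto_rpow_mul_rpow {f : ℝ → ℝ} {σ q ℓ : ℝ} (hq : q ≠ 0)
    (hℓ : ℓ ≠ 0) (hf : ∀ᶠ x in atTop, 0 < f x)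
    (h : Tendsto (fun x => x ^ σ * f x ^ q) atTop (𝓝 ℓ)) :
    Tendsto (fun x => x ^ (σ / q) * f x) atTop (𝓝 (ℓ ^ q⁻¹)) := by
  refine (h.rpow_const (Or.inl hℓ)).congr' ?_
  filter_upwards [hf, eventually_gt_atTop 0] with x hfx hx
  rw [Real.mul_rpow (by positivity) (by positivity), ← Real.rpow_mul hx.le,
    ← Real.rpow_mul hfx.le, mul_inv_cancel₀ hq, Real.rpow_one, div_eq_mul_inv]

theorem differentiableAt_deriv_rpow_const {f : ℝ → ℝ} {x m : ℝ}
    (hf : ∀ᶠ y in 𝓝 x, 0 < f y ∧ DifferentiableAt ℝ f y)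
    (hf' : DifferentiableAt ℝ (deriv f) x) :
    DifferentiableAt ℝ (deriv fun y => f y ^ m) x := by
  have hu' : deriv (fun y => f y ^ m) =ᶠ[𝓝 x] fun y => deriv f y * m * f y ^ (m - 1) :=
    hf.mono fun y hy => deriv_rpow_const hy.2 (Or.inl hy.1.ne')
  obtain ⟨hfx, hdfx⟩ := hf.self_of_nhds
  exact hu'.differentiableAt_iff.2 ((hf'.mul_const m).mul (hdfx.rpow_const (Or.inl hfx.ne')))

noncomputable def profileFlux (m β κ : ℝ) (f : ℝ → ℝ) (x : ℝ) : ℝ :=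
  x ^ (κ - 1) * (β * x * f x + deriv (fun y => f y ^ m) x)

section ProfileFlux

variable {f : ℝ → ℝ} {x m p σ α β κ : ℝ} {N : ℕ}

theorem hasDerivAt_profileFlux (hx : 0 < x) (hf : DifferentiableAt ℝ f x)
    (hu : DifferentiableAt ℝ (deriv fun y => f y ^ m) x) :
    HasDerivAt (profileFlux m β κ f)
      (x ^ (κ - 1) * ((κ - 1) / x * (β * x * f x + deriv (fun y => f y ^ m) x)
        + β * f x + β * x * deriv f x + deriv (deriv fun y => f y ^ m) x)) x := by
  have hpow : HasDerivAt (fun y => y ^ (κ - 1)) ((κ - 1) * x ^ (κ - 1 - 1)) x :=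
    Real.hasDerivAt_rpow_const (Or.inl hx.ne')
  refine (hpow.mul (((hasDerivAt_id x).const_mul β).mul hf.hasDerivAt |>.add
    hu.hasDerivAt)).congr_deriv ?_
  rw [Real.rpow_sub_one hx.ne' (κ - 1)]
  simp only [id, Pi.add_apply, Pi.mul_apply]
  field_simp
  ring

theorem profileFlux_eq (hx : 0 < x) (hfx : 0 < f x)
    (hu' : deriv (fun y => f y ^ m) x = deriv f x * m * f x ^ (m - 1)) :
    profileFlux m β κ f x
      = x ^ κ * f x * (β + m * (x ^ (-1 : ℝ) * f x ^ (m - 2) * deriv f x)) := by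
  have hf2 : f x ^ (m - 2) = f x ^ (m - 1) / f x := by
    rw [← Real.rpow_sub_one hfx.ne']; ring_nf
  rw [profileFlux, hu', hf2, Real.rpow_sub_one hx.ne', Real.rpow_neg_one]
  field_simp

theorem mul_deriv_profileFlux_eq (hx : 0 < x) (hfx : 0 < f x)
    (hu' : deriv (fun y => f y ^ m) x = deriv f x * m * f x ^ (m - 1))
    (hODE : deriv (deriv fun y => f y ^ m) x
        + ((N : ℝ) - 1) / x * deriv (fun y => f y ^ m) x
        - α * f x + β * x * deriv f x + x ^ σ * f x ^ p = 0) :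
    x * (x ^ (κ - 1) * ((κ - 1) / x * (β * x * f x + deriv (fun y => f y ^ m) x)
        + β * f x + β * x * deriv f x + deriv (deriv fun y => f y ^ m) x))
      = x ^ κ * f x * (α + β * κ - x ^ σ * f x ^ (p - 1)
        + (κ - N) * m * (x ^ (-1 : ℝ) * f x ^ (m - 2) * deriv f x)) := by
  have hf2 : f x ^ (m - 2) = f x ^ (m - 1) / f x := by
    rw [← Real.rpow_sub_one hfx.ne']; ring_nf
  have hfp : f x ^ (p - 1) = f x ^ p / f x := Real.rpow_sub_one hfx.ne' p
  have hu'' : deriv (deriv fun y => f y ^ m) x = α * f x - β * x * deriv f x - x ^ σ * f x ^ p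
      - ((N : ℝ) - 1) / x * deriv (fun y => f y ^ m) x := by linarith
  rw [hu'', hu', hf2, hfp, Real.rpow_sub_one hx.ne', Real.rpow_neg_one]
  field_simp
  ring

end ProfileFlux

theorem tail_limit_is_one_over_p_minus_one_general (m p σ : ℝ) (N : ℕ)
    (hp1 : 1 < p)
    (hL : 0 < σ * (m - 1) + 2 * (p - 1))
    (α β : ℝ)
    (hα : α = (σ + 2) / (σ * (m - 1) + 2 * (p - 1)))
    (hβ : β = (m - p) / (σ * (m - 1) + 2 * (p - 1)))
    (R : ℝ) (f : ℝ → ℝ)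
    (hreg : ∀ ξ ∈ Set.Ioi R, 0 < f ξ ∧ DifferentiableAt ℝ f ξ ∧
      DifferentiableAt ℝ (deriv f) ξ)
    (hODE : ∀ ξ ∈ Set.Ioi R,
      deriv (deriv fun x => f x ^ m) ξ
        + ((N : ℝ) - 1) / ξ * deriv (fun x => f x ^ m) ξ
        - α * f ξ + β * ξ * deriv f ξ + ξ ^ σ * f ξ ^ p = 0)
    (hY : Filter.Tendsto (fun ξ : ℝ => ξ ^ (-1 : ℝ) * f ξ ^ (m - 2) * deriv f ξ)
      Filter.atTop (nhds 0))
    (ℓ : ℝ) (hℓpos : 0 < ℓ)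
    (hZ : Filter.Tendsto (fun ξ : ℝ => ξ ^ σ * f ξ ^ (p - 1))
      Filter.atTop (nhds ℓ)) :
    ℓ = 1 / (p - 1) := by
  set κ := σ / (p - 1)
  have hlarge : ∀ᶠ x in atTop, x ∈ Ioi R ∧ 0 < x :=
    (eventually_gt_atTop R).and (eventually_gt_atTop 0)
  have hu' : ∀ x ∈ Ioi R, deriv (fun y => f y ^ m) x = deriv f x * m * f x ^ (m - 1) :=
    fun x hx => deriv_rpow_const (hreg x hx).2.1 (Or.inl (hreg x hx).1.ne')
  have hnear : ∀ x ∈ Ioi R, ∀ᶠ y in 𝓝 x, 0 < f y ∧ DifferentiableAt ℝ f y := fun x hx =>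
    eventually_of_mem (isOpen_Ioi.mem_nhds hx) fun y hy => ⟨(hreg y hy).1, (hreg y hy).2.1⟩
  have hW : Tendsto (fun x => x ^ κ * f x) atTop (𝓝 (ℓ ^ (p - 1)⁻¹)) :=
    tendsto_rpow_div_mul_of_tendsto_rpow_mul_rpow (by linarith) hℓpos.ne'
      (hlarge.mono fun x hx => (hreg x hx.1).1) hZ
  have hflux := hlarge.mono fun x hx => hasDerivAt_profileFlux (m := m) (β := β) (κ := κ) hx.2
    (hreg x hx.1).2.1 (differentiableAt_deriv_rpow_const (hnear x hx.1) (hreg x hx.1).2.2)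
  have hflux_lim := (hW.mul ((tendsto_const_nhds (x := β)).add (hY.const_mul m))).congr'
    (hlarge.mono fun x hx => (profileFlux_eq hx.2 (hreg x hx.1).1 (hu' x hx.1)).symm)
  have hderiv_lim := (hW.mul (((tendsto_const_nhds (x := α + β * κ)).sub hZ).add
      (hY.const_mul ((κ - N) * m)))).congr' (hlarge.mono fun x hx =>
        (mul_deriv_profileFlux_eq hx.2 (hreg x hx.1).1 (hu' x hx.1) (hODE x hx.1)).symm)
  have hzero := eq_zero_of_tendsto_of_tendsto_mul_deriv hflux hflux_lim hderiv_lim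
  have hℓ : ℓ = α + β * κ := by
    have := (mul_eq_zero.1 hzero).resolve_left (Real.rpow_pos_of_pos hℓpos _).ne'
    linarith
  have hp : p - 1 ≠ 0 := by linarith
  rw [hℓ, hα, hβ, show κ = σ / (p - 1) from rfl]
  field_simp
  ring

/-- Lemma 2.4: the only admissible constant limit of ξ^σ f(ξ)^(p-1) at infinity along
a positive solution of the self-similar profile ODE (with X → 0 and Y → 0) is
ℓ = 1/(p-1), corresponding to the tail f(ξ) ~ (1/(p-1))^(1/(p-1)) ξ^(-σ/(p-1)). -/
theorem tail_limit_is_one_over_p_minus_one (m p σ : ℝ) (N : ℕ)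
    (hm : 1 < m) (hp1 : 1 < p) (hpm : p < m)
    (hL : 0 < σ * (m - 1) + 2 * (p - 1)) (hN : 1 ≤ N)
    (α β : ℝ)
    (hα : α = (σ + 2) / (σ * (m - 1) + 2 * (p - 1)))
    (hβ : β = (m - p) / (σ * (m - 1) + 2 * (p - 1)))
    (R : ℝ) (hR : 0 < R) (f : ℝ → ℝ)
    (hreg : ∀ ξ ∈ Set.Ioi R, 0 < f ξ ∧ DifferentiableAt ℝ f ξ ∧
      DifferentiableAt ℝ (deriv f) ξ)
    (hcont : ContinuousOn (deriv (deriv f)) (Set.Ioi R))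
    (hODE : ∀ ξ ∈ Set.Ioi R,
      deriv (deriv fun x => f x ^ m) ξ
        + ((N : ℝ) - 1) / ξ * deriv (fun x => f x ^ m) ξ
        - α * f ξ + β * ξ * deriv f ξ + ξ ^ σ * f ξ ^ p = 0)
    (hX : Filter.Tendsto (fun ξ : ℝ => ξ ^ (-2 : ℝ) * f ξ ^ (m - 1))
      Filter.atTop (nhds 0))
    (hY : Filter.Tendsto (fun ξ : ℝ => ξ ^ (-1 : ℝ) * f ξ ^ (m - 2) * deriv f ξ)
      Filter.atTop (nhds 0))
    (ℓ : ℝ) (hℓpos : 0 < ℓ)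
    (hZ : Filter.Tendsto (fun ξ : ℝ => ξ ^ σ * f ξ ^ (p - 1))
      Filter.atTop (nhds ℓ)) :
    ℓ = 1 / (p - 1) :=
  tail_limit_is_one_over_p_minus_one_general m p σ N hp1 hL α β hα hβ R f hreg hODE hY ℓ hℓpos hZ
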